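/- For all 0<q<1 and all integers n≥2, the consecutive difference of offsets satisfies b_n(q) − b_{n+1}(q) > 2·λ_{n−1}(q)·(κ(q) − λ_{n−1}(q) + q^n). -/

import Mathlib

/-- Partial product of the Euler function: `λ_k(q) = ∏_{i=1}^k (1 - q^i)`, with `λ_0(q) = 1`. -/
noncomputable def eulerLam (q : ℝ) (k : ℕ) : ℝ := ∏ i ∈ Finset.range k, (1 - q ^ (i + 1))

/-- The Euler function `κ(q) = ∏_{i=1}^∞ (1 - q^i)`. -/
noncomputable def eulerKappa (q : ℝ) : ℝ := ∏' i : ℕ, (1 - q ^ (i + 1))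

/-- The tail product `μ_n(q) = ∏_{i=n}^∞ (1 - q^i)`. -/
noncomputable def eulerMu (q : ℝ) (n : ℕ) : ℝ := ∏' i : ℕ, (1 - q ^ (n + i))

/-- The offset `b_n(q) = Σ_{k=1}^n λ_{k-1}(q) λ_{n-k}(q) - n κ(q)²`, the expected number of
posts in a random graph order on `n` elements minus `n κ(q)²`. -/
noncomputable def postOffset (q : ℝ) (n : ℕ) : ℝ :=
  (∑ k ∈ Finset.Icc 1 n, eulerLam q (k - 1) * eulerLam q (n - k)) - n * eulerKappa q ^ 2

/-!
Writing `n = m + 1`, the convolution sums defining the offsets satisfy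
`b_{m+1} - b_{m+2} = ∑_{i+j=m} λ_i λ_j q^{j+1} - λ_{m+1} + κ²`, because `λ_{j+1} = λ_j (1 - q^{j+1})`.
In that sum the term `i = 0` equals `λ_m q^{m+1}`, and the others are at least `λ_m λ_j q^{j+1}`
since `λ` is decreasing; these add up to `λ_m (1 - λ_m)` by telescoping. With
`λ_{m+1} = λ_m (1 - q^{m+1})` the claimed inequality then reduces to `(κ - λ_m)² > 0`, which
holds because `κ ≤ λ_{m+1} < λ_m`.
-/

open Finset

section

variable {q : ℝ}

lemma one_sub_pow_succ_pos (hq0 : 0 ≤ q) (hq1 : q < 1) (i : ℕ) : 0 < 1 - q ^ (i + 1) :=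
  sub_pos.mpr (pow_lt_one₀ hq0 hq1 i.succ_ne_zero)

lemma eulerLam_zero (q : ℝ) : eulerLam q 0 = 1 :=
  prod_range_zero _

lemma eulerLam_succ (q : ℝ) (k : ℕ) : eulerLam q (k + 1) = eulerLam q k * (1 - q ^ (k + 1)) :=
  prod_range_succ _ _

lemma eulerLam_pos (hq0 : 0 ≤ q) (hq1 : q < 1) (k : ℕ) : 0 < eulerLam q k :=
  prod_pos fun i _ => one_sub_pow_succ_pos hq0 hq1 i

lemma eulerLam_succ_lt (hq0 : 0 < q) (hq1 : q < 1) (k : ℕ) :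
    eulerLam q (k + 1) < eulerLam q k := by
  rw [eulerLam_succ]
  exact mul_lt_of_lt_one_right (eulerLam_pos hq0.le hq1 k) (sub_lt_self _ (pow_pos hq0 _))

lemma eulerLam_antitone (hq0 : 0 ≤ q) (hq1 : q < 1) : Antitone (eulerLam q) :=
  antitone_nat_of_succ_le fun k => by
    rw [eulerLam_succ]
    exact mul_le_of_le_one_right (eulerLam_pos hq0 hq1 k).le (sub_le_self _ (pow_nonneg hq0 _))

lemma one_sub_eulerLam (q : ℝ) (m : ℕ) :
    1 - eulerLam q m = ∑ k ∈ range m, eulerLam q k * q ^ (k + 1) := by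
  induction m with
  | zero => simp [eulerLam_zero]
  | succ m ih =>
    rw [sum_range_succ, ← ih, eulerLam_succ]
    ring

lemma multipliable_one_sub_pow_succ (hq0 : 0 ≤ q) (hq1 : q < 1) :
    Multipliable fun i : ℕ => 1 - q ^ (i + 1) := by
  simp_rw [sub_eq_add_neg]
  refine Real.multipliable_one_add_of_summable ?_
  simp_rw [pow_succ]
  exact ((summable_geometric_of_lt_one hq0 hq1).mul_right q).neg

lemma eulerKappa_le_eulerLam (hq0 : 0 ≤ q) (hq1 : q < 1) (k : ℕ) :
    eulerKappa q ≤ eulerLam q k :=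
  (eulerLam_antitone hq0 hq1).le_of_tendsto
    (multipliable_one_sub_pow_succ hq0 hq1).hasProd.tendsto_prod_nat k

lemma eulerKappa_lt_eulerLam (hq0 : 0 < q) (hq1 : q < 1) (k : ℕ) :
    eulerKappa q < eulerLam q k :=
  (eulerKappa_le_eulerLam hq0.le hq1 (k + 1)).trans_lt (eulerLam_succ_lt hq0 hq1 k)

lemma postOffset_succ (q : ℝ) (m : ℕ) :
    postOffset q (m + 1) =
      ∑ p ∈ antidiagonal m, eulerLam q p.1 * eulerLam q p.2 - (m + 1) * eulerKappa q ^ 2 := by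
  rw [postOffset, Nat.sum_antidiagonal_eq_sum_range_succ (fun i j => eulerLam q i * eulerLam q j),
    ← Ico_add_one_right_eq_Icc, sum_Ico_eq_sum_range]
  push_cast
  congr 1
  exact sum_congr rfl fun k _ => by congr 2 <;> omega

lemma postOffset_succ_sub_postOffset_succ_succ (q : ℝ) (m : ℕ) :
    postOffset q (m + 1) - postOffset q (m + 1 + 1) =
      ∑ p ∈ antidiagonal m, eulerLam q p.1 * eulerLam q p.2 * q ^ (p.2 + 1)
        - eulerLam q (m + 1) + eulerKappa q ^ 2 := by
  rw [postOffset_succ, postOffset_succ, Nat.sum_antidiagonal_succ']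
  simp only [eulerLam_succ, eulerLam_zero, mul_one, mul_sub, sum_sub_distrib, ← mul_assoc]
  push_cast
  ring

lemma le_sum_antidiagonal_eulerLam_mul_pow (hq0 : 0 ≤ q) (hq1 : q < 1) (m : ℕ) :
    eulerLam q m * q ^ (m + 1) + eulerLam q m * (1 - eulerLam q m) ≤
      ∑ p ∈ antidiagonal m, eulerLam q p.1 * eulerLam q p.2 * q ^ (p.2 + 1) := by
  cases m with
  | zero => simp [eulerLam_zero]
  | succ k =>
    have hsnd : ∑ j ∈ range (k + 1), eulerLam q j * q ^ (j + 1) =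
        ∑ p ∈ antidiagonal k, eulerLam q p.2 * q ^ (p.2 + 1) := by
      rw [← Nat.sum_antidiagonal_swap, Nat.sum_antidiagonal_eq_sum_range_succ_mk]
      rfl
    rw [Nat.sum_antidiagonal_succ, one_sub_eulerLam, hsnd, mul_sum]
    simp only [eulerLam_zero, one_mul]
    refine add_le_add_right (sum_le_sum fun p hp => ?_) _
    rw [← mul_assoc]
    refine mul_le_mul_of_nonneg_right (mul_le_mul_of_nonneg_right ?_ ?_) (pow_nonneg hq0 _)
    · exact eulerLam_antitone hq0 hq1 (by have := mem_antidiagonal.mp hp; omega)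
    · exact (eulerLam_pos hq0 hq1 _).le

end

/-- For all `0 < q < 1` and all integers `n ≥ 2`,
`b_n(q) - b_{n+1}(q) > 2·λ_{n-1}(q)·(κ(q) - λ_{n-1}(q) + q^n)`. -/
theorem postOffset_diff_gt (q : ℝ) (hq0 : 0 < q) (hq1 : q < 1) (n : ℕ) (hn : 2 ≤ n) :
    2 * eulerLam q (n - 1) * (eulerKappa q - eulerLam q (n - 1) + q ^ n) <
      postOffset q n - postOffset q (n + 1) := by
  obtain ⟨m, rfl⟩ : ∃ m, n = m + 1 := ⟨n - 1, by omega⟩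
  rw [Nat.add_sub_cancel, postOffset_succ_sub_postOffset_succ_succ, eulerLam_succ]
  have hsum := le_sum_antidiagonal_eulerLam_mul_pow hq0.le hq1 m
  have hgap : 0 < (eulerLam q m - eulerKappa q) ^ 2 :=
    pow_pos (sub_pos.mpr (eulerKappa_lt_eulerLam hq0 hq1 m)) 2
  linarith
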